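/- arXiv:2411.12334 — 3 statements merged into one kernel-verified Lean document; each statement's English description precedes it below -/
import Mathlib

section
/- Let z_1,...,z_{2k} be fixed real numbers and let I be a uniformly random k-subset of {1,...,2k}. Then E[((1/k)·Σ_{i∈I} z_i)^2] ≥ (1/(4k^2))·Σ_{r=1}^{2k} z_r^2. -/
open Finset

lemma count_superset {α : Type*} [DecidableEq α] (s t : Finset α) (n : ℕ)
    (hts : t ⊆ s) (hn : n ≤ s.card) :
    ((s.powersetCard n).filter (fun I => t ⊆ I)).card
      = (s.card - t.card).choose (s.card - n) := by
  have hcs : t.card ≤ s.card := card_le_card hts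
  by_cases htn : t.card ≤ n
  · have h1 : ((s.powersetCard n).filter (fun I => t ⊆ I)).card
        = ((s \ t).powersetCard (n - t.card)).card := by
      apply Finset.card_bij' (fun I _ => I \ t) (fun J _ => J ∪ t)
      · intro I hI
        simp only [mem_filter, mem_powersetCard] at hI
        obtain ⟨⟨hIs, hIc⟩, htI⟩ := hI
        rw [mem_powersetCard]
        exact ⟨sdiff_subset_sdiff hIs Subset.rfl, by rw [card_sdiff_of_subset htI, hIc]⟩
      · intro J hJ
        rw [mem_powersetCard] at hJ
        obtain ⟨hJs, hJc⟩ := hJ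
        have hdisj : Disjoint J t := disjoint_of_subset_left hJs sdiff_disjoint
        simp only [mem_filter, mem_powersetCard]
        refine ⟨⟨union_subset (hJs.trans sdiff_subset) hts, ?_⟩, subset_union_right⟩
        rw [card_union_of_disjoint hdisj, hJc, Nat.sub_add_cancel htn]
      · intro I hI
        simp only [mem_filter] at hI
        exact sdiff_union_of_subset hI.2
      · intro J hJ
        rw [mem_powersetCard] at hJ
        have hdisj : Disjoint J t := disjoint_of_subset_left hJ.1 sdiff_disjoint
        exact union_sdiff_cancel_right hdisj
    rw [h1, card_powersetCard, card_sdiff_of_subset hts, ← Nat.choose_symm (by omega)]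
    congr 1
    omega
  · have : (s.powersetCard n).filter (fun I => t ⊆ I) = ∅ := by
      rw [filter_eq_empty_iff]
      intro I hI htI
      rw [mem_powersetCard] at hI
      have := card_le_card htI
      omega
    rw [this, card_empty]
    exact (Nat.choose_eq_zero_of_lt (by omega)).symm

lemma aux1 (m : ℕ) : (2 * m + 2).choose (m + 1) = 2 * ((2 * m + 1).choose (m + 1)) := by
  have h : (2 * m + 2).choose (m + 1) = (2 * m + 1).choose m + (2 * m + 1).choose (m + 1) :=
    Nat.choose_succ_succ (2 * m + 1) m
  have h2 : (2 * m + 1).choose m = (2 * m + 1).choose (m + 1) := by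
    rw [← Nat.choose_symm (by omega)]
    congr 1
    omega
  omega

lemma aux2 (m : ℕ) : 4 * ((2 * m).choose (m + 1)) ≤ (2 * m + 2).choose (m + 1) := by
  have h1 := aux1 m
  have h2 : (2 * m + 1).choose (m + 1) = (2 * m).choose m + (2 * m).choose (m + 1) :=
    Nat.choose_succ_succ (2 * m) m
  have h3 : (2 * m).choose (m + 1) ≤ (2 * m).choose m := by
    have := Nat.choose_le_middle (m + 1) (2 * m)
    rwa [show (2 * m) / 2 = m by omega] at this
  omega

/-- For fixed reals `z_1,...,z_{2k}` and `I` a uniformly random `k`-subset of `{1,...,2k}`,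
`E[((1/k)·Σ_{i∈I} z_i)^2] ≥ (1/(4k^2))·Σ_r z_r^2`. -/
theorem stmt1 (k : ℕ) (hk : 0 < k) (z : Fin (2 * k) → ℝ) :
    (1 / (((Finset.univ : Finset (Fin (2 * k))).powersetCard k).card : ℝ)) *
      ∑ I ∈ (Finset.univ : Finset (Fin (2 * k))).powersetCard k,
        ((1 / (k : ℝ)) * ∑ i ∈ I, z i) ^ 2
    ≥ (1 / (4 * (k : ℝ) ^ 2)) * ∑ r, z r ^ 2 := by
  classical
  obtain ⟨m, rfl⟩ : ∃ m, k = m + 1 := ⟨k - 1, by omega⟩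
  set P := (Finset.univ : Finset (Fin (2 * (m + 1)))).powersetCard (m + 1) with hP
  set C := Nat.choose (2 * m + 2) (m + 1) with hCdef
  set N1 := Nat.choose (2 * m + 1) (m + 1) with hN1def
  set N2 := Nat.choose (2 * m) (m + 1) with hN2def
  have hcard : P.card = C := by
    rw [hP, card_powersetCard, card_univ, Fintype.card_fin, hCdef]
    congr 1
  have hC2 : C = 2 * N1 := aux1 m
  have hN2C : 4 * N2 ≤ C := aux2 m
  have hCpos : 0 < C := Nat.choose_pos (by omega)
  have hcount1 : ∀ i : Fin (2 * (m + 1)), (P.filter (fun I => i ∈ I)).card = N1 := by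
    intro i
    have h := count_superset (univ : Finset (Fin (2 * (m + 1)))) {i} (m + 1) (by simp)
      (by rw [card_univ, Fintype.card_fin]; omega)
    have he : (P.filter (fun I => ({i} : Finset (Fin (2 * (m + 1)))) ⊆ I))
        = P.filter (fun I => i ∈ I) := by
      apply filter_congr; intro I _; simp
    rw [he] at h
    rw [h, card_univ, Fintype.card_fin, card_singleton, hN1def]
    congr 1 <;> omega
  have hcount2 : ∀ i j : Fin (2 * (m + 1)), i ≠ j →
      (P.filter (fun I => i ∈ I ∧ j ∈ I)).card = N2 := by
    intro i j hij
    have h := count_superset (univ : Finset (Fin (2 * (m + 1)))) {i, j} (m + 1) (by simp)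
      (by rw [card_univ, Fintype.card_fin]; omega)
    have he : (P.filter (fun I => ({i, j} : Finset (Fin (2 * (m + 1)))) ⊆ I))
        = P.filter (fun I => i ∈ I ∧ j ∈ I) := by
      apply filter_congr; intro I _; simp [insert_subset_iff]
    rw [he] at h
    rw [h, card_univ, Fintype.card_fin, card_insert_of_notMem (by simpa using hij),
      card_singleton, hN2def]
    congr 1 <;> omega
  set Q := ∑ r, z r ^ 2 with hQdef
  set S := ∑ r, z r with hSdef
  have hQ0 : 0 ≤ Q := Finset.sum_nonneg fun i _ => sq_nonneg _
  have key : ∑ I ∈ P, (∑ i ∈ I, z i) ^ 2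
      = (N2 : ℝ) * S ^ 2 + ((N1 : ℝ) - N2) * Q := by
    have hrep : ∀ I : Finset (Fin (2 * (m + 1))),
        ∑ i ∈ I, z i = ∑ i, if i ∈ I then z i else 0 := by
      intro I; rw [Finset.sum_ite_mem, univ_inter]
    calc ∑ I ∈ P, (∑ i ∈ I, z i) ^ 2
        = ∑ I ∈ P, ∑ i, ∑ j, ((if i ∈ I then z i else 0) * (if j ∈ I then z j else 0)) := by
          refine Finset.sum_congr rfl fun I _ => ?_
          rw [hrep, sq, Finset.sum_mul_sum]
      _ = ∑ i, ∑ j, ∑ I ∈ P, ((if i ∈ I then z i else 0) * (if j ∈ I then z j else 0)) := by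
          rw [Finset.sum_comm]
          exact Finset.sum_congr rfl fun i _ => Finset.sum_comm
      _ = ∑ i, ∑ j, (z i * z j) *
            (((P.filter (fun I => i ∈ I ∧ j ∈ I)).card : ℝ)) := by
          refine Finset.sum_congr rfl fun i _ => Finset.sum_congr rfl fun j _ => ?_
          have h : ∀ I : Finset (Fin (2 * (m + 1))),
              (if i ∈ I then z i else 0) * (if j ∈ I then z j else 0)
              = if i ∈ I ∧ j ∈ I then z i * z j else 0 := by
            intro I; split_ifs with h1 h2 h3 <;> simp_all
          simp_rw [h, ← Finset.sum_filter, Finset.sum_const, nsmul_eq_mul]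
          ring
      _ = ∑ i, ∑ j, (z i * z j) * ((N2 : ℝ) + if i = j then (N1 : ℝ) - N2 else 0) := by
          refine Finset.sum_congr rfl fun i _ => Finset.sum_congr rfl fun j _ => ?_
          by_cases hij : i = j
          · subst hij
            have he : (P.filter (fun I => i ∈ I ∧ i ∈ I)) = P.filter (fun I => i ∈ I) := by
              apply filter_congr; intro I _; simp
            rw [he, hcount1 i, if_pos rfl]; ring
          · rw [hcount2 i j hij, if_neg hij]; ring
      _ = (∑ i, ∑ j, (z i * z j) * (N2 : ℝ))
            + ∑ i, (z i * z i) * ((N1 : ℝ) - N2) := by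
          simp_rw [mul_add, Finset.sum_add_distrib, mul_ite, mul_zero, Finset.sum_ite_eq,
            mem_univ, if_true]
      _ = (N2 : ℝ) * S ^ 2 + ((N1 : ℝ) - N2) * Q := by
          rw [hSdef, hQdef, sq, Finset.sum_mul_sum, Finset.mul_sum]
          congr 1
          · refine Finset.sum_congr rfl fun i _ => ?_
            rw [Finset.mul_sum]
            exact Finset.sum_congr rfl fun j _ => by ring
          · rw [Finset.mul_sum]
            exact Finset.sum_congr rfl fun i _ => by ring
  have hkpos : (0 : ℝ) < ((m : ℝ) + 1) := by positivity
  have hCpos' : (0 : ℝ) < (C : ℝ) := by exact_mod_cast hCpos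
  have hN14 : (C : ℝ) / 4 ≤ (N1 : ℝ) - N2 := by
    have h1 : (C : ℝ) = 2 * N1 := by exact_mod_cast congrArg Nat.cast hC2
    have h2 : 4 * (N2 : ℝ) ≤ C := by exact_mod_cast hN2C
    linarith
  have hT : (C : ℝ) / 4 * Q ≤ ∑ I ∈ P, (∑ i ∈ I, z i) ^ 2 := by
    rw [key]
    have h1 : 0 ≤ (N2 : ℝ) * S ^ 2 := mul_nonneg (Nat.cast_nonneg _) (sq_nonneg _)
    nlinarith [mul_le_mul_of_nonneg_right hN14 hQ0]
  have hsum : ∑ I ∈ P, ((1 / ((m : ℝ) + 1)) * ∑ i ∈ I, z i) ^ 2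
      = (1 / ((m : ℝ) + 1) ^ 2) * ∑ I ∈ P, (∑ i ∈ I, z i) ^ 2 := by
    rw [Finset.mul_sum]
    exact Finset.sum_congr rfl fun I _ => by rw [mul_pow, one_div_pow]
  have hcast : ((m + 1 : ℕ) : ℝ) = (m : ℝ) + 1 := by push_cast; ring
  rw [hcard, hcast, hsum, ge_iff_le]
  have heq : (1 / ((C : ℝ))) * ((1 / ((m : ℝ) + 1) ^ 2) * ((C : ℝ) / 4 * Q))
      = (1 / (4 * ((m : ℝ) + 1) ^ 2)) * Q := by
    have hC0 : (C : ℝ) ≠ 0 := ne_of_gt hCpos'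
    have hm0 : ((m : ℝ) + 1) ≠ 0 := ne_of_gt hkpos
    have hco : (1 / ((C : ℝ))) * ((1 / (((m : ℝ) + 1) ^ 2)) * ((C : ℝ) / 4))
        = 1 / (4 * ((m : ℝ) + 1) ^ 2) := by
      field_simp
    rw [show (1 / ((C : ℝ))) * ((1 / ((m : ℝ) + 1) ^ 2) * ((C : ℝ) / 4 * Q))
        = ((1 / ((C : ℝ))) * ((1 / (((m : ℝ) + 1) ^ 2)) * ((C : ℝ) / 4))) * Q by ring, hco]
  calc (1 / (4 * ((m : ℝ) + 1) ^ 2)) * Q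
      = (1 / (C : ℝ)) * ((1 / ((m : ℝ) + 1) ^ 2) * ((C : ℝ) / 4 * Q)) := heq.symm
    _ ≤ (1 / (C : ℝ)) * ((1 / ((m : ℝ) + 1) ^ 2) * ∑ I ∈ P, (∑ i ∈ I, z i) ^ 2) := by
        apply mul_le_mul_of_nonneg_left _ (by positivity)
        apply mul_le_mul_of_nonneg_left hT (by positivity)
end

section
/- Fix k ≥ 1 and reals z_1,...,z_{2mk} with |z_i| ≤ 1, partitioned into m blocks Ī_1,...,Ī_m of size 2k each. For each j let I_j be an independent uniformly random k-subset of Ī_j and define L_j = ((1/k)Σ_{i∈I_j} z_i)^2. If (1/(2mk))Σ_{i=1}^{2mk} z_i^2 = ζ, then Pr[(1/m)Σ_{j=1}^m L_j ≤ ζ/(4k)] ≤ 2·exp(−ζm/(32k^2)). -/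
/-!
Chernoff bound with parameter `1/4`: on the event `∑ⱼ Lⱼ ≤ a` we have
`exp ((a - ∑ⱼ Lⱼ) / 4) ≥ 1`, and the sum of `exp (-∑ⱼ Lⱼ / 4)` over the product of the blocks
factorises into one sum per block. Since `0 ≤ Lⱼ ≤ 1`, `exp (-L / 4) ≤ 1 - 3L/16`, so each factor
is controlled by the mean of `Lⱼ`. Counting the `k`-subsets of a `2k`-block that contain a given
pair shows that the mean of `(∑_{i ∈ I} zᵢ)²` is at least a quarter of the block's `∑ zᵢ²`.
Altogether the probability is at most `exp (-ζm / (32k))`.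
-/

open Finset Real

lemma choose_two_mul_add_two_eq_two_mul_choose (K : ℕ) :
    (2 * K + 2).choose (K + 1) = 2 * (2 * K + 1).choose (K + 1) := by
  rw [Nat.choose_succ_succ', Nat.choose_symm_half]
  ring

lemma two_mul_choose_two_mul_succ_le (K : ℕ) :
    2 * (2 * K).choose (K + 1) ≤ (2 * K + 1).choose (K + 1) := by
  have hmiddle := Nat.choose_le_middle (K + 1) (2 * K)
  rw [Nat.mul_div_cancel_left K two_pos] at hmiddle
  rw [Nat.choose_succ_succ']
  omega

lemma exp_neg_quarter_mul_le {x : ℝ} (h0 : 0 ≤ x) (h2 : x ≤ 2) :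
    exp (-(1 / 4 * x)) ≤ 1 - 3 / 16 * x := by
  rw [exp_neg, inv_le_iff_one_le_mul₀ (exp_pos _)]
  calc (1 : ℝ) ≤ (1 - 3 / 16 * x) * (1 + 1 / 4 * x + (1 / 4 * x) ^ 2 / 2) := by nlinarith
    _ ≤ (1 - 3 / 16 * x) * exp (1 / 4 * x) := by
        gcongr
        · linarith
        · exact quadratic_le_exp_of_nonneg (by positivity)

lemma sum_exp_neg_quarter_mul_le {ι : Type*} (s : Finset ι) {f : ι → ℝ}
    (hf : ∀ i ∈ s, 0 ≤ f i ∧ f i ≤ 2) {μ : ℝ} (hμ : #s * μ ≤ ∑ i ∈ s, f i) :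
    ∑ i ∈ s, exp (-(1 / 4 * f i)) ≤ #s * exp (-(3 / 16 * μ)) := by
  calc ∑ i ∈ s, exp (-(1 / 4 * f i)) ≤ ∑ i ∈ s, (1 - 3 / 16 * f i) :=
        sum_le_sum fun i hi => exp_neg_quarter_mul_le (hf i hi).1 (hf i hi).2
    _ ≤ #s * (1 - 3 / 16 * μ) := by
        rw [sum_sub_distrib, ← mul_sum, sum_const, nsmul_one]
        linarith
    _ ≤ #s * exp (-(3 / 16 * μ)) := by
        gcongr
        linarith [add_one_le_exp (-(3 / 16 * μ))]

lemma card_filter_sum_le_le_exp_mul_prod {ι : Type*} [Fintype ι] [DecidableEq ι]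
    {X : ι → Type*} [∀ j, Fintype (X j)] (f : ∀ j, X j → ℝ) {t : ℝ} (ht : 0 ≤ t) (a : ℝ) :
    (#{ω : (∀ j, X j) | ∑ j, f j (ω j) ≤ a} : ℝ) ≤
      exp (t * a) * ∏ j, ∑ x, exp (-(t * f j x)) := by
  rw [Fintype.prod_sum, mul_sum, card_eq_sum_ones, Nat.cast_sum]
  refine (sum_le_sum fun ω hω => ?_).trans
    (sum_le_sum_of_subset_of_nonneg (filter_subset _ univ) fun ω _ _ => ?_)
  · rw [← exp_sum, ← exp_add, Nat.cast_one, one_le_exp_iff, sum_neg_distrib, ← mul_sum]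
    nlinarith [(mem_filter.1 hω).2]
  · positivity

section Subsets

variable {α : Type*} [DecidableEq α]

/-- Unlike `Finset.card_filter_powersetCard_subset`, this has no truncated `n - #s`, so it also
covers `#s > n`, where both sides vanish. -/
lemma card_filter_powersetCard_subset_eq_choose {s t : Finset α} {n : ℕ} (hst : s ⊆ t)
    (hn : n ≤ #t) :
    #{I ∈ t.powersetCard n | s ⊆ I} = (#t - #s).choose (#t - n) := by
  have hst' := card_le_card hst
  rcases le_or_gt #s n with hsn | hns
  · rw [card_filter_powersetCard_subset s t n hst hsn, ← Nat.choose_symm (by omega)]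
    congr 1
    omega
  · rw [Nat.choose_eq_zero_of_lt (by omega), card_eq_zero, filter_eq_empty_iff]
    intro I hI hsI
    have := card_le_card hsI
    rw [(mem_powersetCard.1 hI).2] at this
    omega

lemma sum_sum_sum_eq_sum_sum_card_filter_mul {B : Finset α} (P : Finset (Finset α))
    (hP : ∀ I ∈ P, I ⊆ B) (f : α → α → ℝ) :
    ∑ I ∈ P, ∑ i ∈ I, ∑ j ∈ I, f i j =
      ∑ i ∈ B, ∑ j ∈ B, (#{I ∈ P | i ∈ I ∧ j ∈ I} : ℝ) * f i j := by
  have hrestrict : ∀ I ∈ P, ∑ i ∈ I, ∑ j ∈ I, f i j =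
      ∑ i ∈ B, ∑ j ∈ B, if i ∈ I ∧ j ∈ I then f i j else 0 := by
    intro I hI
    have hextend : ∀ g : α → ℝ, ∑ i ∈ I, g i = ∑ i ∈ B, if i ∈ I then g i else 0 :=
      fun g => by rw [sum_ite_mem, inter_eq_right.2 (hP I hI)]
    simp only [hextend, ite_and]
    refine sum_congr rfl fun i _ => ?_
    split_ifs <;> simp
  rw [sum_congr rfl hrestrict, sum_comm]
  refine sum_congr rfl fun i _ => ?_
  rw [sum_comm]
  refine sum_congr rfl fun j _ => ?_
  rw [← sum_filter, sum_const, nsmul_eq_mul]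

lemma sum_powersetCard_sq_sum {B : Finset α} {k : ℕ} (hk : k ≤ #B) (z : α → ℝ) :
    ∑ I ∈ B.powersetCard k, (∑ i ∈ I, z i) ^ 2 =
      ((#B - 1).choose (#B - k) : ℝ) * ∑ i ∈ B, z i ^ 2
        + ((#B - 2).choose (#B - k) : ℝ) * ((∑ i ∈ B, z i) ^ 2 - ∑ i ∈ B, z i ^ 2) := by
  set A : ℝ := (((#B - 1).choose (#B - k) : ℕ) : ℝ)
  set C : ℝ := (((#B - 2).choose (#B - k) : ℕ) : ℝ)
  have hcount : ∀ i ∈ B, ∀ j ∈ B,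
      (#{I ∈ B.powersetCard k | i ∈ I ∧ j ∈ I} : ℝ) * (z i * z j) =
        C * (z i * z j) + if i = j then (A - C) * z i ^ 2 else 0 := by
    intro i hi j hj
    have hpair : {I ∈ B.powersetCard k | i ∈ I ∧ j ∈ I} =
        {I ∈ B.powersetCard k | {i, j} ⊆ I} :=
      filter_congr fun I _ => by simp [insert_subset_iff]
    rw [hpair,
      card_filter_powersetCard_subset_eq_choose (by simp [insert_subset_iff, hi, hj]) hk]
    split_ifs with hij
    · subst hij
      simp [A]
      ring
    · simp [card_pair hij, C]
  simp only [sq, sum_mul_sum]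
  rw [sum_sum_sum_eq_sum_sum_card_filter_mul _ (fun I hI => (mem_powersetCard.1 hI).1)]
  simp only [sum_congr rfl fun i hi => sum_congr rfl (hcount i hi), sum_add_distrib,
    sum_ite_eq, ← mul_sum, ← sq]
  rw [sum_ite_mem, inter_self, ← mul_sum]
  ring

lemma choose_mul_sum_sq_le_sum_powersetCard_sq_sum {B : Finset α} {k : ℕ} (hk : 0 < k)
    (hB : #B = 2 * k) (z : α → ℝ) :
    ((2 * k).choose k : ℝ) * ∑ i ∈ B, z i ^ 2 ≤
      4 * ∑ I ∈ B.powersetCard k, (∑ i ∈ I, z i) ^ 2 := by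
  obtain ⟨K, rfl⟩ : ∃ K, k = K + 1 := ⟨k - 1, by omega⟩
  rw [sum_powersetCard_sq_sum (by omega), hB, show 2 * (K + 1) - 1 = 2 * K + 1 by omega,
    show 2 * (K + 1) - (K + 1) = K + 1 by omega, show 2 * (K + 1) - 2 = 2 * K by omega,
    show 2 * (K + 1) = 2 * K + 2 by ring, choose_two_mul_add_two_eq_two_mul_choose]
  have hAC : (2 * (2 * K).choose (K + 1) : ℝ) ≤ (2 * K + 1).choose (K + 1) := by
    exact_mod_cast two_mul_choose_two_mul_succ_le K
  have hQ : 0 ≤ ∑ i ∈ B, z i ^ 2 := sum_nonneg fun i _ => sq_nonneg _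
  have hC : (0 : ℝ) ≤ (2 * K).choose (K + 1) := Nat.cast_nonneg _
  push_cast
  nlinarith [mul_le_mul_of_nonneg_right hAC hQ, mul_nonneg hC (sq_nonneg (∑ i ∈ B, z i))]

lemma sum_powersetCard_exp_neg_sq_le {B : Finset α} {k : ℕ}
    (hk : 0 < k) (hB : #B = 2 * k) {z : α → ℝ} (hz : ∀ i ∈ B, |z i| ≤ 1) :
    ∑ I ∈ B.powersetCard k, exp (-(1 / 4 * ((1 / k : ℝ) * ∑ i ∈ I, z i) ^ 2)) ≤
      (2 * k).choose k * exp (-(3 / (64 * k ^ 2) * ∑ i ∈ B, z i ^ 2)) := by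
  have hk' : (0 : ℝ) < k := by exact_mod_cast hk
  have hP : #(B.powersetCard k) = (2 * k).choose k := by rw [card_powersetCard, hB]
  have hrange : ∀ I ∈ B.powersetCard k,
      0 ≤ ((1 / k : ℝ) * ∑ i ∈ I, z i) ^ 2 ∧ ((1 / k : ℝ) * ∑ i ∈ I, z i) ^ 2 ≤ 2 := by
    intro I hI
    obtain ⟨hIB, hIk⟩ := mem_powersetCard.1 hI
    have hsum : |∑ i ∈ I, z i| ≤ k :=
      calc |∑ i ∈ I, z i| ≤ ∑ i ∈ I, |z i| := abs_sum_le_sum_abs _ _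
        _ ≤ ∑ i ∈ I, 1 := sum_le_sum fun i hi => hz i (hIB hi)
        _ = k := by simp [hIk]
    have hle : ((1 / k : ℝ) * ∑ i ∈ I, z i) ^ 2 ≤ 1 := by
      rw [sq_le_one_iff_abs_le_one, abs_mul, abs_of_pos (by positivity), one_div_mul_eq_div,
        div_le_one hk']
      exact hsum
    exact ⟨sq_nonneg _, hle.trans one_le_two⟩
  have hmean : (#(B.powersetCard k) : ℝ) * ((∑ i ∈ B, z i ^ 2) / (4 * k ^ 2)) ≤
      ∑ I ∈ B.powersetCard k, ((1 / k : ℝ) * ∑ i ∈ I, z i) ^ 2 := by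
    have := choose_mul_sum_sq_le_sum_powersetCard_sq_sum hk hB z
    simp only [mul_pow, ← mul_sum, hP]
    field_simp
    linarith
  refine (sum_exp_neg_quarter_mul_le _ hrange hmean).trans_eq ?_
  rw [hP]
  ring_nf

lemma card_filter_sum_sq_le {ι : Type*} [Fintype ι] [DecidableEq ι] {k : ℕ}
    (hk : 0 < k) {blk : ι → Finset α} (hcard : ∀ j, #(blk j) = 2 * k) {z : α → ℝ}
    (hz : ∀ i, |z i| ≤ 1) (a : ℝ) :
    (#{ω : ∀ j, {I // I ∈ (blk j).powersetCard k} |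
        ∑ j, ((1 / k : ℝ) * ∑ i ∈ (ω j : Finset α), z i) ^ 2 ≤ a} : ℝ) ≤
      ((2 * k).choose k : ℝ) ^ Fintype.card ι *
        exp (1 / 4 * a - 3 / (64 * k ^ 2) * ∑ j, ∑ i ∈ blk j, z i ^ 2) := by
  calc _ ≤ exp (1 / 4 * a) * ∏ j, ∑ I : {I // I ∈ (blk j).powersetCard k},
          exp (-(1 / 4 * ((1 / k : ℝ) * ∑ i ∈ (I : Finset α), z i) ^ 2)) :=
        card_filter_sum_le_le_exp_mul_prod (fun j (I : {I // I ∈ (blk j).powersetCard k}) =>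
          ((1 / k : ℝ) * ∑ i ∈ (I : Finset α), z i) ^ 2) (by norm_num) a
    _ ≤ exp (1 / 4 * a) *
          ∏ j, ((2 * k).choose k * exp (-(3 / (64 * k ^ 2) * ∑ i ∈ blk j, z i ^ 2))) := by
        gcongr with j
        rw [sum_coe_sort ((blk j).powersetCard k)
          fun I => exp (-(1 / 4 * ((1 / k : ℝ) * ∑ i ∈ I, z i) ^ 2))]
        exact sum_powersetCard_exp_neg_sq_le hk (hcard j) fun i _ => hz i
    _ = _ := by
        rw [prod_mul_distrib, prod_const, ← exp_sum, card_univ, mul_left_comm, ← exp_add,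
          sum_neg_distrib, ← mul_sum, ← sub_eq_add_neg]

end Subsets

open Classical in
/-- Fix `k ≥ 1` and reals `z_i`, `|z_i| ≤ 1`, indexed by `{1,...,2mk}` partitioned into `m`
blocks of size `2k`. For independently chosen uniform `k`-subsets `I_j` of each block and
`L_j = ((1/k)Σ_{i∈I_j} z_i)^2`, if `(1/(2mk))Σ z_i^2 = ζ` then
`Pr[(1/m)Σ_j L_j ≤ ζ/(4k)] ≤ 2 exp(−ζm/(32k²))`. -/
theorem stmt8 (m k : ℕ) (hm : 0 < m) (hk : 0 < k)
    (z : Fin (2 * m * k) → ℝ) (hz : ∀ i, |z i| ≤ 1)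
    (blk : Fin m → Finset (Fin (2 * m * k)))
    (hcard : ∀ j, (blk j).card = 2 * k)
    (hdisj : ∀ j j', j ≠ j' → Disjoint (blk j) (blk j'))
    (hcover : ∀ i, ∃ j, i ∈ blk j)
    (ζ : ℝ) (hζ : (1 / (2 * (m : ℝ) * k)) * ∑ i, z i ^ 2 = ζ) :
    (((Finset.univ : Finset (∀ j : Fin m, {I : Finset (Fin (2 * m * k)) //
          I ∈ (blk j).powersetCard k})).filter
        (fun ω => (1 / (m : ℝ)) * ∑ j, ((1 / (k : ℝ)) * ∑ i ∈ (ω j : Finset _), z i) ^ 2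
          ≤ ζ / (4 * k))).card : ℝ)
      / (Fintype.card (∀ j : Fin m, {I : Finset (Fin (2 * m * k)) //
          I ∈ (blk j).powersetCard k}) : ℝ)
      ≤ 2 * exp (-(ζ * m) / (32 * k ^ 2)) := by
  have hm' : (0 : ℝ) < m := by exact_mod_cast hm
  have hζ0 : 0 ≤ ζ := hζ ▸ by positivity
  have hcard_Ω : Fintype.card (∀ j : Fin m, {I // I ∈ (blk j).powersetCard k}) =
      (2 * k).choose k ^ m := by
    simp only [Fintype.card_pi, Fintype.card_coe, card_powersetCard, hcard, prod_const,
      card_univ, Fintype.card_fin]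
  have hblocks : ∑ j, ∑ i ∈ blk j, z i ^ 2 = 2 * m * k * ζ := by
    rw [← sum_biUnion fun a _ b _ hab => hdisj a b hab,
      eq_univ_of_forall fun i => mem_biUnion.2 ((hcover i).imp fun j hj => ⟨mem_univ j, hj⟩),
      ← hζ]
    field_simp
  have hexp : exp (-(ζ * m) / (32 * k)) ≤ exp (-(ζ * m) / (32 * k ^ 2)) := by
    have hkk : (k : ℝ) ≤ k ^ 2 := by nlinarith [(Nat.one_le_cast (α := ℝ)).2 hk]
    rw [exp_le_exp, neg_div, neg_div, neg_le_neg_iff]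
    gcongr
  rw [hcard_Ω, div_le_iff₀ (Nat.cast_pos.2 (pow_pos (Nat.choose_pos (by omega)) _))]
  calc _ ≤ (#{ω : ∀ j, {I // I ∈ (blk j).powersetCard k} |
          ∑ j, ((1 / k : ℝ) * ∑ i ∈ (ω j : Finset _), z i) ^ 2 ≤ m * ζ / (4 * k)} : ℝ) := by
        refine Nat.cast_le.2 (card_le_card (monotone_filter_right _ fun ω _ hω => ?_))
        rw [one_div_mul_eq_div, div_le_iff₀ hm'] at hω
        exact hω.trans_eq (by ring)
    _ ≤ ((2 * k).choose k : ℝ) ^ m *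
          exp (1 / 4 * (m * ζ / (4 * k)) - 3 / (64 * k ^ 2) * (2 * m * k * ζ)) := by
        simpa only [Fintype.card_fin, hblocks] using card_filter_sum_sq_le hk hcard hz _
    _ = exp (-(ζ * m) / (32 * k)) * ((2 * k).choose k ^ m : ℕ) := by
        push_cast
        field_simp
        ring_nf
    _ ≤ 2 * exp (-(ζ * m) / (32 * k ^ 2)) * ((2 * k).choose k ^ m : ℕ) := by
        gcongr
        linarith [exp_pos (-(ζ * m) / (32 * k ^ 2))]
end

section
/- Let φ: R^d → R^D, let h(x) = r^T φ(x) for a fixed vector r ∈ R^D, and let bags B_1,...,B_m of size k be formed from target points with bag-labels y_{B_j}, and let (z_1,ℓ_1),...,(z_{mk},ℓ_{mk}) be source examples with h(x), labels in [0,1]. Then the difference between the sample bag loss (1/m)Σ_j ((1/k)Σ_{x∈B_j} h(x) − y_{B_j})^2 and the sample instance loss (1/mk)Σ_i (h(z_i) − ℓ_i)^2 is at most ξ·‖r‖_2 + λ' + R, where ξ = 2‖(1/m)Σ_j y_{B_j}·(1/k)Σ_{x∈B_j} φ(x) − (1/mk)Σ_i ℓ_i φ(z_i)‖_2, λ' =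 |(1/mk)Σ_i (y_i^2 − ℓ_i^2)| with y_i the target instance labels, and R = |(1/mk)Σ_i (h(x_i)^2 − h(z_i)^2)| with x_i the target instances. -/
open Finset
open scoped RealInnerProductSpace

/-!
Expand both squared losses. By Jensen, the square of a bag average is at most the bag average
of the squares, so the bag loss is bounded by the mean squared prediction, minus twice the mean
of bag-label times bag prediction, plus the mean squared label. By linearity of `h = ⟪r, φ ·⟫`
the two cross terms are `⟪r, ·⟫` of the two feature-label means, so their difference is at most
`‖r‖` times the distance of those means (Cauchy–Schwarz); the squared terms give `λ'` and `R`.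
-/

section

variable {ι κ : Type*} [Fintype ι] [Fintype κ]

lemma sq_avg_le_avg_sq (f : κ → ℝ) :
    ((1 / (Fintype.card κ : ℝ)) * ∑ i, f i) ^ 2 ≤ (1 / (Fintype.card κ : ℝ)) * ∑ i, f i ^ 2 := by
  simpa only [one_div_mul_eq_div, card_univ] using
    sum_div_card_sq_le_sum_sq_div_card (s := univ) (f := f)

lemma bagLoss_le (p q : ι → κ → ℝ) :
    (1 / (Fintype.card ι : ℝ)) * ∑ j, ((1 / (Fintype.card κ : ℝ)) * ∑ i, p j i
        - (1 / (Fintype.card κ : ℝ)) * ∑ i, q j i) ^ 2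
      ≤ (1 / ((Fintype.card ι : ℝ) * Fintype.card κ)) * ∑ j, ∑ i, p j i ^ 2
        - 2 * ((1 / (Fintype.card ι : ℝ)) * ∑ j, ((1 / (Fintype.card κ : ℝ)) * ∑ i, q j i)
            * ((1 / (Fintype.card κ : ℝ)) * ∑ i, p j i))
        + (1 / ((Fintype.card ι : ℝ) * Fintype.card κ)) * ∑ j, ∑ i, q j i ^ 2 := by
  set c : ℝ := 1 / (Fintype.card κ : ℝ)
  have hbag (j : ι) : (c * ∑ i, p j i - c * ∑ i, q j i) ^ 2
      ≤ c * ∑ i, p j i ^ 2 - 2 * ((c * ∑ i, q j i) * (c * ∑ i, p j i)) + c * ∑ i, q j i ^ 2 := by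
    nlinarith [sq_avg_le_avg_sq (p j), sq_avg_le_avg_sq (q j)]
  calc _ ≤ (1 / (Fintype.card ι : ℝ)) * ∑ j, (c * ∑ i, p j i ^ 2
          - 2 * ((c * ∑ i, q j i) * (c * ∑ i, p j i)) + c * ∑ i, q j i ^ 2) := by
        gcongr with j; exact hbag j
    _ = _ := by
        simp only [sum_add_distrib, sum_sub_distrib, ← mul_sum, c]
        ring

lemma instanceLoss_eq (c : ℝ) (p q : ι → κ → ℝ) :
    c * ∑ j, ∑ i, (p j i - q j i) ^ 2
      = c * ∑ j, ∑ i, p j i ^ 2 - 2 * (c * ∑ j, ∑ i, q j i * p j i)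
        + c * ∑ j, ∑ i, q j i ^ 2 := by
  have hsq (a b : ℝ) : (a - b) ^ 2 = a ^ 2 - 2 * (b * a) + b ^ 2 := by ring
  simp only [hsq, sum_add_distrib, sum_sub_distrib, ← mul_sum]
  ring

variable {E : Type*} [NormedAddCommGroup E] [InnerProductSpace ℝ E]

theorem bagLoss_sub_instanceLoss_le (r : E) (u w : ι → κ → E) (y ℓ : ι → κ → ℝ) :
    (1 / (Fintype.card ι : ℝ)) * ∑ j, ((1 / (Fintype.card κ : ℝ)) * ∑ i, ⟪r, u j i⟫
        - (1 / (Fintype.card κ : ℝ)) * ∑ i, y j i) ^ 2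
      - (1 / ((Fintype.card ι : ℝ) * Fintype.card κ)) * ∑ j, ∑ i, (⟪r, w j i⟫ - ℓ j i) ^ 2
    ≤ (2 * ‖(1 / (Fintype.card ι : ℝ)) • ∑ j, ((1 / (Fintype.card κ : ℝ)) * ∑ i, y j i) •
            ((1 / (Fintype.card κ : ℝ)) • ∑ i, u j i)
          - (1 / ((Fintype.card ι : ℝ) * Fintype.card κ)) • ∑ j, ∑ i, ℓ j i • w j i‖) * ‖r‖
      + |(1 / ((Fintype.card ι : ℝ) * Fintype.card κ)) * ∑ j, ∑ i, (y j i ^ 2 - ℓ j i ^ 2)|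
      + |(1 / ((Fintype.card ι : ℝ) * Fintype.card κ)) *
          ∑ j, ∑ i, (⟪r, u j i⟫ ^ 2 - ⟪r, w j i⟫ ^ 2)| := by
  set a : ℝ := 1 / (Fintype.card ι : ℝ)
  set c : ℝ := 1 / (Fintype.card κ : ℝ)
  set n : ℝ := 1 / ((Fintype.card ι : ℝ) * Fintype.card κ)
  set target := a • ∑ j, (c * ∑ i, y j i) • (c • ∑ i, u j i)
  set source := n • ∑ j, ∑ i, ℓ j i • w j i
  have inner_target : ⟪r, target⟫ = a * ∑ j, (c * ∑ i, y j i) * (c * ∑ i, ⟪r, u j i⟫) := by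
    simp only [target, inner_sum, real_inner_smul_right]
  have inner_source : ⟪r, source⟫ = n * ∑ j, ∑ i, ℓ j i * ⟪r, w j i⟫ := by
    simp only [source, inner_sum, real_inner_smul_right]
  have cross : ⟪r, source⟫ - ⟪r, target⟫ ≤ ‖target - source‖ * ‖r‖ := by
    rw [← inner_sub_right, ← norm_sub_rev, mul_comm]
    exact real_inner_le_norm _ _
  have split (f g : ι → κ → ℝ) : n * ∑ j, ∑ i, (f j i - g j i)
      = n * ∑ j, ∑ i, f j i - n * ∑ j, ∑ i, g j i := by
    simp only [sum_sub_distrib, mul_sub]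
  have labels := split (fun j i => y j i ^ 2) (fun j i => ℓ j i ^ 2)
  have predictions := split (fun j i => ⟪r, u j i⟫ ^ 2) (fun j i => ⟪r, w j i⟫ ^ 2)
  have bag := bagLoss_le (fun j i => ⟪r, u j i⟫) y
  rw [instanceLoss_eq]
  linarith [le_abs_self (n * ∑ j, ∑ i, (y j i ^ 2 - ℓ j i ^ 2)),
    le_abs_self (n * ∑ j, ∑ i, (⟪r, u j i⟫ ^ 2 - ⟪r, w j i⟫ ^ 2))]

end

theorem stmt12_general (d D m k : ℕ)
    (φ : (Fin d → ℝ) → EuclideanSpace ℝ (Fin D)) (r : EuclideanSpace ℝ (Fin D))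
    (h : (Fin d → ℝ) → ℝ) (hdef : ∀ v, h v = ⟪r, φ v⟫)
    (x : Fin m → Fin k → (Fin d → ℝ)) (y : Fin m → Fin k → ℝ)
    (z : Fin m → Fin k → (Fin d → ℝ)) (ℓ : Fin m → Fin k → ℝ) :
    (1 / (m : ℝ)) * ∑ j, ((1 / (k : ℝ)) * ∑ i, h (x j i)
        - (1 / (k : ℝ)) * ∑ i, y j i) ^ 2
      - (1 / ((m : ℝ) * k)) * ∑ j, ∑ i, (h (z j i) - ℓ j i) ^ 2
    ≤ (2 * ‖(1 / (m : ℝ)) • ∑ j, ((1 / (k : ℝ)) * ∑ i, y j i) •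
            ((1 / (k : ℝ)) • ∑ i, φ (x j i))
          - (1 / ((m : ℝ) * k)) • ∑ j, ∑ i, ℓ j i • φ (z j i)‖) * ‖r‖
      + |(1 / ((m : ℝ) * k)) * ∑ j, ∑ i, (y j i ^ 2 - ℓ j i ^ 2)|
      + |(1 / ((m : ℝ) * k)) * ∑ j, ∑ i, (h (x j i) ^ 2 - h (z j i) ^ 2)| := by
  simp only [hdef]
  simpa only [Fintype.card_fin] using
    bagLoss_sub_instanceLoss_le r (fun j i => φ (x j i)) (fun j i => φ (z j i)) y ℓ

/-- Lemma 1 (bag loss vs. instance loss under covariate shift): for a linear predictor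
`h x = ⟪r, φ x⟫` over an embedding `φ`, with target bags `B_j = {x j i}_i` (labels `y j i`,
bag-labels the averages) and source examples `(z, ℓ)`, all predictions and labels in `[0,1]`,
the sample bag loss exceeds the sample source instance loss by at most
`ξ·‖r‖ + λ' + R`, where `ξ` is the covariate-shift loss, `λ'` the label term and `R` the
label-independent regularization term. -/
theorem stmt12 (d D m k : ℕ) (hm : 0 < m) (hk : 0 < k)
    (φ : (Fin d → ℝ) → EuclideanSpace ℝ (Fin D)) (r : EuclideanSpace ℝ (Fin D))
    (h : (Fin d → ℝ) → ℝ) (hdef : ∀ v, h v = ⟪r, φ v⟫)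
    (x : Fin m → Fin k → (Fin d → ℝ)) (y : Fin m → Fin k → ℝ)
    (z : Fin m → Fin k → (Fin d → ℝ)) (ℓ : Fin m → Fin k → ℝ)
    (hy : ∀ j i, y j i ∈ Set.Icc (0 : ℝ) 1) (hℓ : ∀ j i, ℓ j i ∈ Set.Icc (0 : ℝ) 1)
    (hhx : ∀ j i, h (x j i) ∈ Set.Icc (0 : ℝ) 1)
    (hhz : ∀ j i, h (z j i) ∈ Set.Icc (0 : ℝ) 1) :
    (1 / (m : ℝ)) * ∑ j, ((1 / (k : ℝ)) * ∑ i, h (x j i)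
        - (1 / (k : ℝ)) * ∑ i, y j i) ^ 2
      - (1 / ((m : ℝ) * k)) * ∑ j, ∑ i, (h (z j i) - ℓ j i) ^ 2
    ≤ (2 * ‖(1 / (m : ℝ)) • ∑ j, ((1 / (k : ℝ)) * ∑ i, y j i) •
            ((1 / (k : ℝ)) • ∑ i, φ (x j i))
          - (1 / ((m : ℝ) * k)) • ∑ j, ∑ i, ℓ j i • φ (z j i)‖) * ‖r‖
      + |(1 / ((m : ℝ) * k)) * ∑ j, ∑ i, (y j i ^ 2 - ℓ j i ^ 2)|
      + |(1 / ((m : ℝ) * k)) * ∑ j, ∑ i, (h (x j i) ^ 2 - h (z j i) ^ 2)| :=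
  stmt12_general d D m k φ r h hdef x y z ℓ
end
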